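/- Every finite matroid that is 3-flat is pseudomodular. -/

import Mathlib

/-- A matroid on a finite ground set `N`, given by an integer-valued rank
function satisfying the standard rank axioms. -/
structure FinMatroid (N : Type) [Fintype N] [DecidableEq N] where
  r : Finset N → ℤ
  r_nonneg : ∀ A, 0 ≤ r A
  r_le_card : ∀ A, r A ≤ (A.card : ℤ)
  r_mono : ∀ ⦃A B : Finset N⦄, A ⊆ B → r A ≤ r B
  submodular : ∀ A B, r (A ∪ B) + r (A ∩ B) ≤ r A + r B

namespace FinMatroid

variable {N : Type} [Fintype N] [DecidableEq N]

/-- A set `F` is a flat if adding any element outside of `F` increases the rank. -/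
def IsFlat (M : FinMatroid N) (F : Finset N) : Prop :=
  ∀ n ∉ F, M.r F < M.r (insert n F)

instance (M : FinMatroid N) (F : Finset N) : Decidable (M.IsFlat F) := by
  unfold IsFlat; infer_instance

/-- The Δ function of a (multi-indexed) family of sets: `Δ(C) = Σ_{S ⊆ I} (−1)^{|S|} r(F_S)`,
where `F_S` is the intersection of the members indexed by `S` for nonempty `S`, and
`F_∅` is the union of all members of the family. -/
def delta (M : FinMatroid N) {ι : Type} [Fintype ι] [DecidableEq ι]
    (F : ι → Finset N) : ℤ :=
  ∑ S : Finset ι, (-1 : ℤ) ^ S.card *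
    M.r (if S.Nonempty then S.inf F else Finset.univ.sup F)

/-- `M` is `n`-flat if `Δ(C) ≤ 0` for every family `C` of at most `n` flats. -/
def NFlat (M : FinMatroid N) (n : ℕ) : Prop :=
  ∀ (ι : Type) (_ : Fintype ι) (_ : DecidableEq ι) (F : ι → Finset N),
    Fintype.card ι ≤ n → (∀ i, M.IsFlat (F i)) → M.delta F ≤ 0

/-- `M` is totally flat if `Δ(C) ≤ 0` for every finite family `C` of flats. -/
def TotallyFlat (M : FinMatroid N) : Prop :=
  ∀ (ι : Type) (_ : Fintype ι) (_ : DecidableEq ι) (F : ι → Finset N),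
    (∀ i, M.IsFlat (F i)) → M.delta F ≤ 0

/-- `r(A/B) := r(A ∪ B) − r(B)`, the rank of `A` after contracting `B`. -/
def relRk (M : FinMatroid N) (A B : Finset N) : ℤ :=
  M.r (A ∪ B) - M.r B

/-- `B₀` is the pseudointersection of `A` and `B`: a flat `B₀ ⊆ B` such that for every
flat `B₁ ⊆ B`, `r(A/B₁) = r(A/B)` if and only if `B₀ ⊆ B₁`. -/
def IsPseudoInter (M : FinMatroid N) (A B B₀ : Finset N) : Prop :=
  M.IsFlat B₀ ∧ B₀ ⊆ B ∧
    ∀ B₁, M.IsFlat B₁ → B₁ ⊆ B → (M.relRk A B₁ = M.relRk A B ↔ B₀ ⊆ B₁)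

/-- `M` is pseudomodular if the pseudointersection of `A` and `B` exists for
all flats `A`, `B`. -/
def Pseudomodular (M : FinMatroid N) : Prop :=
  ∀ A B, M.IsFlat A → M.IsFlat B → ∃ B₀, M.IsPseudoInter A B B₀

/-- The closure of `A`: the smallest flat containing `A`, i.e. the intersection
of all flats containing `A`. -/
def cl (M : FinMatroid N) (A : Finset N) : Finset N :=
  Finset.univ.filter (fun x => ∀ F : Finset N, M.IsFlat F → A ⊆ F → x ∈ F)

/-- A set `S` is cyclic if removing any element of `S` does not change its rank. -/
def Cyclic (M : FinMatroid N) (S : Finset N) : Prop :=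
  ∀ n ∈ S, M.r (S.erase n) = M.r S

/-- A circuit is a minimal dependent set: it is dependent, and every proper
subset is independent. -/
def IsCircuit (M : FinMatroid N) (S : Finset N) : Prop :=
  M.r S < (S.card : ℤ) ∧ ∀ T ⊂ S, M.r T = (T.card : ℤ)

end FinMatroid

/-
If flats `X, Y ⊆ B` both satisfy `r(A/X) = r(A/B)`, choose flats `F ⊇ A ∪ X` and `G ⊇ A ∪ Y` of
the same ranks as `A ∪ X` and `A ∪ Y`. Then `F ∩ B = X` and `G ∩ B = Y`, and the inequality
`Δ(F, G, B) ≤ 0` given by 3-flatness rearranges to `r(A/(X ∩ Y)) ≤ r(A/B)`. So the flats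
`X ⊆ B` with `r(A/X) = r(A/B)` are closed under intersection, and the smallest one is the
pseudointersection of `A` and `B`.
-/

namespace FinMatroid

variable {N : Type} [Fintype N] [DecidableEq N] (M : FinMatroid N)

lemma relRk_anti (A : Finset N) {C C' : Finset N} (h : C ⊆ C') :
    M.relRk A C' ≤ M.relRk A C := by
  have hsub := M.submodular (A ∪ C) C'
  have hunion : (A ∪ C) ∪ C' = A ∪ C' := by
    rw [Finset.union_assoc, Finset.union_eq_right.mpr h]
  have hinter := M.r_mono (Finset.subset_inter Finset.subset_union_right h : C ⊆ (A ∪ C) ∩ C')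
  rw [hunion] at hsub
  unfold relRk
  linarith

lemma r_union_eq_of_forall_r_insert_eq {A S : Finset N}
    (h : ∀ x ∈ S, M.r (insert x A) = M.r A) : M.r (A ∪ S) = M.r A := by
  induction S using Finset.induction_on with
  | empty => simp
  | @insert x S _ ih =>
    have hS := ih fun y hy => h y (Finset.mem_insert_of_mem hy)
    have hx := h x (Finset.mem_insert_self _ _)
    have hsub := M.submodular (A ∪ S) (insert x A)
    have hunion : (A ∪ S) ∪ insert x A = A ∪ insert x S := by
      ext y
      simp only [Finset.mem_union, Finset.mem_insert]
      tauto
    have hinter := M.r_mono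
      (Finset.subset_inter Finset.subset_union_left (Finset.subset_insert _ _) :
        A ⊆ (A ∪ S) ∩ insert x A)
    have hA := M.r_mono (Finset.subset_union_left : A ⊆ A ∪ insert x S)
    rw [hunion] at hsub
    linarith

lemma exists_isFlat_superset_r_eq (A : Finset N) :
    ∃ F, M.IsFlat F ∧ A ⊆ F ∧ M.r F = M.r A := by
  -- the closure of `A`
  set F := Finset.univ.filter fun x => M.r (insert x A) = M.r A with hF
  have hAF : A ⊆ F := fun x hx => by simp [hF, Finset.insert_eq_self.mpr hx]
  have hrF : M.r F = M.r A := by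
    rw [← Finset.union_eq_right.mpr hAF]
    exact M.r_union_eq_of_forall_r_insert_eq fun x hx => by simpa [hF] using hx
  refine ⟨F, fun y hy => ?_, hAF, hrF⟩
  have hne : M.r (insert y A) ≠ M.r A := by simpa [hF] using hy
  have hA := M.r_mono (Finset.subset_insert y A)
  have hFy := M.r_mono (Finset.insert_subset_insert y hAF)
  omega

lemma isFlat_inter {F G : Finset N} (hF : M.IsFlat F) (hG : M.IsFlat G) :
    M.IsFlat (F ∩ G) := by
  have key : ∀ F G : Finset N, M.IsFlat F → ∀ x ∉ F,
      M.r (F ∩ G) < M.r (insert x (F ∩ G)) := by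
    intro F G hF x hxF
    have hsub := M.submodular (insert x (F ∩ G)) F
    have hunion : insert x (F ∩ G) ∪ F = insert x F := by
      ext y
      simp only [Finset.mem_union, Finset.mem_insert, Finset.mem_inter]
      tauto
    have hinter : insert x (F ∩ G) ∩ F = F ∩ G := by
      ext y
      simp only [Finset.mem_inter, Finset.mem_insert]
      constructor
      · rintro ⟨rfl | hy, hyF⟩
        exacts [absurd hyF hxF, hy]
      · exact fun hy => ⟨Or.inr hy, hy.1⟩
    have hx := hF x hxF
    rw [hunion, hinter] at hsub
    linarith
  intro x hx
  by_cases hxF : x ∈ F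
  · rw [Finset.inter_comm]
    exact key G F hG x fun hxG => hx (Finset.mem_inter.mpr ⟨hxF, hxG⟩)
  · exact key F G hF x hxF

lemma eq_of_isFlat_of_subset_of_r_le {X W : Finset N} (hX : M.IsFlat X) (hXW : X ⊆ W)
    (hr : M.r W ≤ M.r X) : W = X := by
  refine Finset.Subset.antisymm (fun w hw => ?_) hXW
  by_contra hwX
  have := M.r_mono (Finset.insert_subset hw hXW)
  linarith [hX w hwX]

lemma inter_eq_of_relRk_eq {A B X F : Finset N} (hX : M.IsFlat X) (hXB : X ⊆ B)
    (hAXF : A ∪ X ⊆ F) (hrF : M.r F = M.r (A ∪ X)) (hAX : M.relRk A X = M.relRk A B) :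
    F ∩ B = X := by
  refine M.eq_of_isFlat_of_subset_of_r_le hX
    (Finset.subset_inter (Finset.subset_union_right.trans hAXF) hXB) ?_
  have hsub := M.submodular F B
  have hAB := M.r_mono (Finset.union_subset_union_left (Finset.subset_union_left.trans hAXF) :
    A ∪ B ⊆ F ∪ B)
  unfold relRk at hAX
  linarith

lemma delta_fin3 (G : Fin 3 → Finset N) :
    M.delta G =
      M.r (G 0 ∪ (G 1 ∪ G 2)) - M.r (G 0) - M.r (G 1) - M.r (G 2)
        + M.r (G 0 ∩ G 1) + M.r (G 0 ∩ G 2) + M.r (G 1 ∩ G 2)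
        - M.r (G 0 ∩ (G 1 ∩ G 2)) := by
  have huniv : (Finset.univ : Finset (Finset (Fin 3))) =
      {∅, {0}, {1}, {2}, {0, 1}, {0, 2}, {1, 2}, {0, 1, 2}} := by decide
  rw [delta, huniv, show (Finset.univ : Finset (Fin 3)) = {0, 1, 2} by decide]
  simp +decide [Finset.sum_insert, Finset.inf_insert,
    Finset.sup_insert, Finset.inf_eq_inter, Finset.sup_eq_union]
  ring

variable {M}

lemma NFlat.delta_three_le (h : M.NFlat 3) {F G H : Finset N}
    (hF : M.IsFlat F) (hG : M.IsFlat G) (hH : M.IsFlat H) :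
    M.r (F ∪ (G ∪ H)) - M.r F - M.r G - M.r H + M.r (F ∩ G) + M.r (F ∩ H) + M.r (G ∩ H)
      - M.r (F ∩ (G ∩ H)) ≤ 0 := by
  have hΔ := h (Fin 3) inferInstance inferInstance ![F, G, H] (by simp)
    (fun i => by fin_cases i <;> assumption)
  simpa [delta_fin3] using hΔ

lemma NFlat.relRk_inter_eq (h : M.NFlat 3) {A B X Y : Finset N} (hB : M.IsFlat B)
    (hX : M.IsFlat X) (hY : M.IsFlat Y) (hXB : X ⊆ B) (hYB : Y ⊆ B)
    (hAX : M.relRk A X = M.relRk A B) (hAY : M.relRk A Y = M.relRk A B) :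
    M.relRk A (X ∩ Y) = M.relRk A B := by
  obtain ⟨F, hF, hAXF, hrF⟩ := M.exists_isFlat_superset_r_eq (A ∪ X)
  obtain ⟨G, hG, hAYG, hrG⟩ := M.exists_isFlat_superset_r_eq (A ∪ Y)
  have hFB := M.inter_eq_of_relRk_eq hX hXB hAXF hrF hAX
  have hGB := M.inter_eq_of_relRk_eq hY hYB hAYG hrG hAY
  have hFGB : F ∩ (G ∩ B) = X ∩ Y := by
    rw [← hFB, ← hGB]
    ext
    simp only [Finset.mem_inter]
    tauto
  have hΔ := h.delta_three_le hF hG hB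
  rw [hFGB, hFB, hGB] at hΔ
  have hAB : M.r (A ∪ B) ≤ M.r (F ∪ (G ∪ B)) := M.r_mono <| Finset.union_subset
    ((Finset.subset_union_left.trans hAXF).trans Finset.subset_union_left)
    (Finset.subset_union_right.trans Finset.subset_union_right)
  have hAXY : M.r (A ∪ X ∩ Y) ≤ M.r (F ∩ G) := M.r_mono <| Finset.union_subset
    (Finset.subset_inter (Finset.subset_union_left.trans hAXF)
      (Finset.subset_union_left.trans hAYG))
    (Finset.inter_subset_inter (Finset.subset_union_right.trans hAXF)
      (Finset.subset_union_right.trans hAYG))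
  have hle := (M.relRk_anti A hXB).trans (M.relRk_anti A (Finset.inter_subset_left (s₂ := Y)))
  unfold relRk at hAX hAY hle ⊢
  linarith

variable (M)

lemma exists_isPseudoInter_of_relRk_inter_eq {A B : Finset N} (hB : M.IsFlat B)
    (hinter : ∀ X Y, M.IsFlat X → M.IsFlat Y → X ⊆ B → Y ⊆ B →
      M.relRk A X = M.relRk A B → M.relRk A Y = M.relRk A B →
      M.relRk A (X ∩ Y) = M.relRk A B) :
    ∃ B₀, M.IsPseudoInter A B B₀ := by
  set S := Finset.univ.filter fun X => M.IsFlat X ∧ X ⊆ B ∧ M.relRk A X = M.relRk A B with hS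
  have hmem : ∀ X, X ∈ S ↔ M.IsFlat X ∧ X ⊆ B ∧ M.relRk A X = M.relRk A B := by
    simp [hS]
  obtain ⟨B₀, hB₀S, hmin⟩ :=
    S.exists_min_image Finset.card ⟨B, (hmem B).2 ⟨hB, subset_rfl, rfl⟩⟩
  obtain ⟨hB₀, hB₀B, hAB₀⟩ := (hmem B₀).1 hB₀S
  refine ⟨B₀, hB₀, hB₀B, fun B₁ hB₁ hB₁B => ⟨fun hAB₁ => ?_, fun hB₀B₁ => ?_⟩⟩
  · have hcard := hmin _ <| (hmem _).2 ⟨M.isFlat_inter hB₀ hB₁,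
      Finset.inter_subset_left.trans hB₀B, hinter _ _ hB₀ hB₁ hB₀B hB₁B hAB₀ hAB₁⟩
    rw [← Finset.eq_of_subset_of_card_le Finset.inter_subset_left hcard]
    exact Finset.inter_subset_right
  · exact le_antisymm (hAB₀ ▸ M.relRk_anti A hB₀B₁) (M.relRk_anti A hB₁B)

end FinMatroid

/-- Every finite matroid that is 3-flat is pseudomodular. -/
theorem pseudomodular_of_threeFlat {N : Type} [Fintype N] [DecidableEq N]
    (M : FinMatroid N) (h : M.NFlat 3) : M.Pseudomodular :=
  fun _ _ _ hB => M.exists_isPseudoInter_of_relRk_inter_eq hB fun _ _ hX hY hXB hYB hAX hAY =>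
    h.relRk_inter_eq hB hX hY hXB hYB hAX hAY
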